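/- arXiv:2503.00880 — 3 statements merged into one kernel-verified Lean document; each statement's English description precedes it below -/
import Mathlib

section
/- Let T > 0 and a ∈ ℝ, and let F be the hitting-time functional on C([0,T];ℝ). If g ∈ C([0,T];ℝ) does not have a local maximum at the point F(g), then F is continuous at g with respect to the supremum norm; that is, for every ε > 0 there exists δ > 0 such that every g̃ ∈ C([0,T];ℝ) with sup_{t∈[0,T]} |g̃(t) − g(t)| < δ satisfies |F(g̃) − F(g)| < ε. -/
/-!
Below `F(g)` the function `g` stays strictly below `a` on the compact interval `[0, F(g) - ε]`,
hence with a positive margin, and a uniformly close `g̃` stays below `a` there too: `F` is lower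
semicontinuous. Above `F(g)`, if `F(g) < T` then `g(F(g)) ≥ a` (the hitting set is closed), and since
`F(g)` is not a local maximum there is a point `s` within `ε` of `F(g)` with `g(s) > g(F(g)) ≥ a`;
any `g̃` close enough to `g` at `s` also exceeds `a` at `s`, so `F(g̃) ≤ s`.
-/

open Set

/-- The hitting-time functional `F(g) = min(inf {t ∈ [0,T] : g(t) ≥ a}, T)`,
with the convention that the infimum over the empty set is `+∞`
(so that `F(g) = T` when `g` stays strictly below `a` on `[0,T]`). -/
noncomputable def hittingTime (T a : ℝ) (g : ℝ → ℝ) : ℝ :=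
  sInf (insert T {t | t ∈ Set.Icc 0 T ∧ a ≤ g t})

/-- `g` has a local maximum at `t₀` (within `[0,T]`). -/
def HasLocalMaxAt (T : ℝ) (g : ℝ → ℝ) (t₀ : ℝ) : Prop :=
  ∃ ε > 0, ∀ s ∈ Set.Icc 0 T, |s - t₀| ≤ ε → g s ≤ g t₀

theorem IsCompact.forall_lt_of_sSup_image_lt {α : Type*} [TopologicalSpace α] {K : Set α}
    (hK : IsCompact K) {f : α → ℝ} (hf : ContinuousOn f K) {δ : ℝ} (h : sSup (f '' K) < δ) :
    ∀ x ∈ K, f x < δ :=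
  fun _ hx => (le_csSup (hK.bddAbove_image hf) (mem_image_of_mem f hx)).trans_lt h

section hittingTime

variable {T a : ℝ} {g : ℝ → ℝ}

theorem bddBelow_hittingSet (T a : ℝ) (g : ℝ → ℝ) :
    BddBelow (insert T {t | t ∈ Icc 0 T ∧ a ≤ g t}) :=
  bddBelow_insert.mpr (bddBelow_Icc.mono fun _ ht => ht.1)

theorem hittingTime_le (T a : ℝ) (g : ℝ → ℝ) : hittingTime T a g ≤ T :=
  csInf_le (bddBelow_hittingSet T a g) (mem_insert _ _)

theorem hittingTime_le_of_le_apply {t : ℝ} (ht : t ∈ Icc 0 T) (hat : a ≤ g t) :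
    hittingTime T a g ≤ t :=
  csInf_le (bddBelow_hittingSet T a g) (mem_insert_of_mem _ ⟨ht, hat⟩)

theorem apply_lt_of_lt_hittingTime {t : ℝ} (ht : t ∈ Icc 0 T) (hlt : t < hittingTime T a g) :
    g t < a :=
  lt_of_not_ge fun hat => (hittingTime_le_of_le_apply ht hat).not_gt hlt

theorem le_hittingTime {s : ℝ} (hsT : s ≤ T) (h : ∀ t ∈ Icc 0 T, t < s → g t < a) :
    s ≤ hittingTime T a g := by
  refine le_csInf (insert_nonempty _ _) ?_
  rintro t (rfl | ⟨ht, hat⟩)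
  · exact hsT
  · exact le_of_not_gt fun hts => (h t ht hts).not_ge hat

theorem le_apply_hittingTime (hg : ContinuousOn g (Icc 0 T)) (hlt : hittingTime T a g < T) :
    a ≤ g (hittingTime T a g) := by
  set S := {t | t ∈ Icc 0 T ∧ a ≤ g t}
  have hS : IsClosed S := hg.preimage_isClosed_of_isClosed isClosed_Icc isClosed_Ici
  have hne : S.Nonempty := by
    refine nonempty_iff_ne_empty.mpr fun hS => hlt.ne ?_
    simp only [hittingTime, S, hS, insert_empty_eq, csInf_singleton]
  have hbdd : BddBelow S := bddBelow_insert.mp (bddBelow_hittingSet T a g)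
  have hτ : hittingTime T a g = min T (sInf S) := csInf_insert hbdd hne
  rw [hτ] at hlt ⊢
  rw [min_eq_right (min_lt_iff.mp hlt |>.resolve_left (lt_irrefl T)).le]
  exact (hS.csInf_mem hne hbdd).2

theorem exists_le_hittingTime_of_lt (hg : ContinuousOn g (Icc 0 T)) {s : ℝ}
    (hs : s < hittingTime T a g) :
    ∃ δ > 0, ∀ g' : ℝ → ℝ, (∀ t ∈ Icc 0 T, |g' t - g t| < δ) → s ≤ hittingTime T a g' := by
  have hsT : s ≤ T := hs.le.trans (hittingTime_le T a g)
  have hIcc : Icc 0 s ⊆ Icc 0 T := Icc_subset_Icc_right hsT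
  have hbelow : ∀ t ∈ Icc 0 s, 0 < a - g t := fun t ht =>
    sub_pos.mpr (apply_lt_of_lt_hittingTime (hIcc ht) (ht.2.trans_lt hs))
  obtain ⟨δ, hδ, hmargin⟩ :=
    isCompact_Icc.exists_forall_le' (continuousOn_const.sub (hg.mono hIcc)) hbelow
  refine ⟨δ, hδ, fun g' hclose => le_hittingTime hsT fun t ht hts => ?_⟩
  have hmargin_t : δ ≤ a - g t := hmargin t ⟨ht.1, hts.le⟩
  have hclose_t := (abs_lt.mp (hclose t ht)).2
  linarith

theorem exists_hittingTime_le_of_lt_apply {s : ℝ} (hs : s ∈ Icc 0 T) (has : a < g s) :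
    ∃ δ > 0, ∀ g' : ℝ → ℝ, (∀ t ∈ Icc 0 T, |g' t - g t| < δ) → hittingTime T a g' ≤ s := by
  refine ⟨g s - a, sub_pos.mpr has, fun g' hclose => hittingTime_le_of_le_apply hs ?_⟩
  have hclose_s := (abs_lt.mp (hclose s hs)).1
  linarith

theorem exists_hittingTime_lt_add_of_not_hasLocalMaxAt (hg : ContinuousOn g (Icc 0 T))
    (hmax : ¬ HasLocalMaxAt T g (hittingTime T a g)) {ε : ℝ} (hε : 0 < ε) :
    ∃ δ > 0, ∀ g' : ℝ → ℝ, (∀ t ∈ Icc 0 T, |g' t - g t| < δ) →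
      hittingTime T a g' < hittingTime T a g + ε := by
  rcases (hittingTime_le T a g).eq_or_lt with hτT | hτT
  · exact ⟨1, one_pos, fun g' _ => (hittingTime_le T a g').trans_lt (by linarith)⟩
  obtain ⟨s, hs, hsτ, hgs⟩ : ∃ s ∈ Icc 0 T, |s - hittingTime T a g| ≤ ε / 2 ∧
      g (hittingTime T a g) < g s := by
    by_contra! h
    exact hmax ⟨ε / 2, half_pos hε, h⟩
  obtain ⟨δ, hδ, hle⟩ :=
    exists_hittingTime_le_of_lt_apply hs ((le_apply_hittingTime hg hτT).trans_lt hgs)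
  refine ⟨δ, hδ, fun g' hclose => (hle g' hclose).trans_lt ?_⟩
  linarith [(abs_le.mp hsτ).2]

end hittingTime

theorem hittingTime_continuous_at_general
    (T a : ℝ)
    (g : ℝ → ℝ) (hg : ContinuousOn g (Set.Icc 0 T))
    (hmax : ¬ HasLocalMaxAt T g (hittingTime T a g)) :
    ∀ ε > 0, ∃ δ > 0, ∀ g' : ℝ → ℝ, ContinuousOn g' (Set.Icc 0 T) →
      sSup ((fun t => |g' t - g t|) '' Set.Icc 0 T) < δ →
      |hittingTime T a g' - hittingTime T a g| < ε := by
  intro ε hε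
  obtain ⟨δ₁, hδ₁, hlower⟩ :=
    exists_le_hittingTime_of_lt hg (sub_lt_self (hittingTime T a g) (half_pos hε))
  obtain ⟨δ₂, hδ₂, hupper⟩ := exists_hittingTime_lt_add_of_not_hasLocalMaxAt hg hmax hε
  refine ⟨min δ₁ δ₂, lt_min hδ₁ hδ₂, fun g' hg' hsup => ?_⟩
  have hclose := isCompact_Icc.forall_lt_of_sSup_image_lt (hg'.sub hg).abs hsup
  have h₁ := hlower g' fun t ht => (hclose t ht).trans_le (min_le_left _ _)
  have h₂ := hupper g' fun t ht => (hclose t ht).trans_le (min_le_right _ _)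
  rw [abs_lt]
  constructor <;> linarith

theorem hittingTime_continuous_at
    (T a : ℝ) (hT : 0 < T)
    (g : ℝ → ℝ) (hg : ContinuousOn g (Set.Icc 0 T))
    (hmax : ¬ HasLocalMaxAt T g (hittingTime T a g)) :
    ∀ ε > 0, ∃ δ > 0, ∀ g' : ℝ → ℝ, ContinuousOn g' (Set.Icc 0 T) →
      sSup ((fun t => |g' t - g t|) '' Set.Icc 0 T) < δ →
      |hittingTime T a g' - hittingTime T a g| < ε :=
  hittingTime_continuous_at_general T a g hg hmax
end

section
/- Let T > 0, let α, β : [0,T] → ℝ be continuous with α(t) ≤ β(t) for all t, let Y : [0,T] → ℝ be continuous, and let A, C : [0,T] → ℝ be continuous nondecreasing functions with A(0) = C(0) = 0. Assume that α(t) ≤ Y(t) ≤ β(t) for all t ∈ [0,T], and that the Skorokhod minimality conditions hold: ∫_{[0,T]} (Y(t) − α(t)) dA(t) = 0 and ∫_{[0,T]} (β(t) − Y(t)) dC(t) = 0, the integrals being taken with respect to the Lebesgue–Stieltjes measures of A and C. For s ∈ [0,T] define x(s) := Y(T−s) + (A(T−s) − A(T)) − (C(T−s) − C(T)), ŷ(s)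 := Y(T−s), ηˡ(s) := A(T) − A(T−s), and ηᵘ(s) := C(T) − C(T−s). Then ηˡ and ηᵘ are continuous, nondecreasing, vanish at s = 0, and satisfy ŷ(s) = x(s) + ηˡ(s) − ηᵘ(s) and α(T−s) ≤ ŷ(s) ≤ β(T−s) for all s ∈ [0,T], together with the Skorokhod minimality conditions ∫_{[0,T]} (ŷ(s) − α(T−s)) dηˡ(s) = 0 and ∫_{[0,T]} (β(T−s) − ŷ(s)) dηᵘ(s) = 0. In other words, the time-reversed pair (ŷ, ηˡ − ηᵘ) solves the Skorokhod problem for x on the time-varying interval [α(T−·), β(T−·)]. -/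
/-!
Since `A` is continuous, `dA` has no atoms, so the reflection `t ↦ T - t`, which sends `(a, b]`
to `[T - b, T - a)`, carries `dA` to the Lebesgue–Stieltjes measure of `ηˡ(s) = A(T) - A(T - s)`;
likewise for `C` and `ηᵘ`. The minimality conditions of the reversed problem are then the given
ones after the change of variables `s = T - t`, and everything else holds pointwise.
-/

open MeasureTheory Set

namespace StieltjesFunction

lemma leftLim_eq_of_continuous {f : StieltjesFunction ℝ} (hf : Continuous f) (x : ℝ) :
    Function.leftLim f x = f x :=
  hf.continuousWithinAt.leftLim_eq

variable (f : StieltjesFunction ℝ) (hf : Continuous f) (T : ℝ)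

def reflect : StieltjesFunction ℝ where
  toFun s := f T - f (T - s)
  mono' _ _ h := sub_le_sub_left (f.mono (sub_le_sub_left h T)) _
  right_continuous' _ := (by fun_prop : Continuous fun s => f T - f (T - s)).continuousWithinAt

@[simp]
lemma reflect_apply (s : ℝ) : f.reflect hf T s = f T - f (T - s) := rfl

lemma continuous_reflect : Continuous (f.reflect hf T) := by
  change Continuous fun s => f T - f (T - s)
  fun_prop

lemma measure_reflect : (f.reflect hf T).measure = f.measure.map (T - ·) := by
  refine Measure.ext_of_Ioc _ _ fun a b _ => ?_
  rw [Measure.map_apply (by fun_prop) measurableSet_Ioc, preimage_const_sub_Ioc, measure_Ico,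
    measure_Ioc, leftLim_eq_of_continuous hf, leftLim_eq_of_continuous hf, reflect_apply,
    reflect_apply, sub_sub_sub_cancel_left]

lemma setIntegral_reflect {E : Type*} [NormedAddCommGroup E] [NormedSpace ℝ E]
    (g : ℝ → E) (s : Set ℝ) :
    ∫ x in s, g (T - x) ∂(f.reflect hf T).measure = ∫ t in (T - ·) ⁻¹' s, g t ∂f.measure := by
  rw [measure_reflect, (measurableEmbedding_subLeft T).setIntegral_map]
  simp only [sub_sub_cancel]

end StieltjesFunction

theorem skorokhod_time_reversal_general
    (T : ℝ)
    (α β Y : ℝ → ℝ)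
    (A C : StieltjesFunction ℝ)
    (hAc : Continuous (A : ℝ → ℝ)) (hCc : Continuous (C : ℝ → ℝ))
    (hbar : ∀ t ∈ Icc 0 T, α t ≤ Y t ∧ Y t ≤ β t)
    (hminA : ∫ t in Icc 0 T, (Y t - α t) ∂A.measure = 0)
    (hminC : ∫ t in Icc 0 T, (β t - Y t) ∂C.measure = 0) :
    ∃ ηl ηu : StieltjesFunction ℝ,
      (∀ s, ηl s = A T - A (T - s)) ∧
      (∀ s, ηu s = C T - C (T - s)) ∧
      Continuous (ηl : ℝ → ℝ) ∧ Continuous (ηu : ℝ → ℝ) ∧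
      Monotone (ηl : ℝ → ℝ) ∧ Monotone (ηu : ℝ → ℝ) ∧
      ηl 0 = 0 ∧ ηu 0 = 0 ∧
      (∀ s ∈ Icc 0 T,
        Y (T - s) =
          (Y (T - s) + (A (T - s) - A T) - (C (T - s) - C T)) + ηl s - ηu s) ∧
      (∀ s ∈ Icc 0 T, α (T - s) ≤ Y (T - s) ∧ Y (T - s) ≤ β (T - s)) ∧
      (∫ s in Icc 0 T, (Y (T - s) - α (T - s)) ∂ηl.measure = 0) ∧
      (∫ s in Icc 0 T, (β (T - s) - Y (T - s)) ∂ηu.measure = 0) := by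
  have reflect_Icc : (T - ·) ⁻¹' Icc 0 T = Icc 0 T := by
    rw [preimage_const_sub_Icc, sub_self, sub_zero]
  refine ⟨A.reflect hAc T, C.reflect hCc T, fun _ => rfl, fun _ => rfl,
    A.continuous_reflect hAc T, C.continuous_reflect hCc T,
    (A.reflect hAc T).mono, (C.reflect hCc T).mono, by simp, by simp,
    fun s _ => by simp only [StieltjesFunction.reflect_apply]; ring,
    fun s hs => hbar (T - s) ⟨sub_nonneg.2 hs.2, sub_le_self T hs.1⟩, ?_, ?_⟩
  · rw [A.setIntegral_reflect hAc T (fun t => Y t - α t), reflect_Icc, hminA]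
  · rw [C.setIntegral_reflect hCc T (fun t => β t - Y t), reflect_Icc, hminC]

/-- Time reversal of a doubly reflected path solves a Skorokhod problem on the
time-varying interval `[α(T-·), β(T-·)]`: given continuous barriers `α ≤ β`, a
continuous path `Y` between the barriers, and continuous nondecreasing reflection
terms `A`, `C` vanishing at `0` that satisfy the Skorokhod minimality conditions
(with respect to their Lebesgue–Stieltjes measures), the functions
`ηˡ(s) = A(T) - A(T-s)` and `ηᵘ(s) = C(T) - C(T-s)` are continuous, nondecreasing,
vanish at `0`, and the reversed path `ŷ(s) = Y(T-s)` satisfies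
`ŷ = x + ηˡ - ηᵘ` with `x(s) = Y(T-s) + (A(T-s) - A(T)) - (C(T-s) - C(T))`,
stays within the reversed barriers, and satisfies the Skorokhod minimality
conditions with respect to the Lebesgue–Stieltjes measures of `ηˡ` and `ηᵘ`. -/
theorem skorokhod_time_reversal
    (T : ℝ) (hT : 0 < T)
    (α β Y : ℝ → ℝ)
    (hα : ContinuousOn α (Icc 0 T)) (hβ : ContinuousOn β (Icc 0 T))
    (hαβ : ∀ t ∈ Icc 0 T, α t ≤ β t)
    (hY : ContinuousOn Y (Icc 0 T))
    (A C : StieltjesFunction ℝ)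
    (hAc : Continuous (A : ℝ → ℝ)) (hCc : Continuous (C : ℝ → ℝ))
    (hA0 : A 0 = 0) (hC0 : C 0 = 0)
    (hbar : ∀ t ∈ Icc 0 T, α t ≤ Y t ∧ Y t ≤ β t)
    (hminA : ∫ t in Icc 0 T, (Y t - α t) ∂A.measure = 0)
    (hminC : ∫ t in Icc 0 T, (β t - Y t) ∂C.measure = 0) :
    ∃ ηl ηu : StieltjesFunction ℝ,
      (∀ s, ηl s = A T - A (T - s)) ∧
      (∀ s, ηu s = C T - C (T - s)) ∧
      Continuous (ηl : ℝ → ℝ) ∧ Continuous (ηu : ℝ → ℝ) ∧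
      Monotone (ηl : ℝ → ℝ) ∧ Monotone (ηu : ℝ → ℝ) ∧
      ηl 0 = 0 ∧ ηu 0 = 0 ∧
      (∀ s ∈ Icc 0 T,
        Y (T - s) =
          (Y (T - s) + (A (T - s) - A T) - (C (T - s) - C T)) + ηl s - ηu s) ∧
      (∀ s ∈ Icc 0 T, α (T - s) ≤ Y (T - s) ∧ Y (T - s) ≤ β (T - s)) ∧
      (∫ s in Icc 0 T, (Y (T - s) - α (T - s)) ∂ηl.measure = 0) ∧
      (∫ s in Icc 0 T, (β (T - s) - Y (T - s)) ∂ηu.measure = 0) :=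
  skorokhod_time_reversal_general T α β Y A C hAc hCc hbar hminA hminC
end

section
/- Let T > 0, let α, β : [0,T] → ℝ be continuous with inf_{t∈[0,T]} (β(t) − α(t)) > 0, let Y : [0,T] → ℝ be continuous, and let A, C : [0,T] → ℝ be continuous nondecreasing with A(0) = C(0) = 0. Assume α(t) ≤ Y(t) ≤ β(t) for all t and that the Skorokhod minimality conditions ∫_{[0,T]} (Y(t) − α(t)) dA(t) = 0 and ∫_{[0,T]} (β(t) − Y(t)) dC(t) = 0 hold, the integrals being with respect to the Lebesgue–Stieltjes measures of A and C. Set K := A − C and, for s ∈ [0,T], define the time-reversed free path x(s) := Y(T−s) + (K(T−s) − K(T)) and the time-reversed barriers α̃(s) := α(T−s), β̃(s) := β(T−s). Define the first boundary-hitting times T_α̃ := inf{s ∈ (0,T] : x(s) ≤ α̃(s)} and T_β̃ := inf{s ∈ (0,T] : x(s) ≥ β̃(s)} (each equal to +∞ if the corresponding set is empty), and the path functionals H(s) := sup_{0≤u≤s} [ (x(u) − β̃(u)) ∧ inf_{u≤r≤s} (x(r) − α̃(r)) ] and L(s) := inf_{0≤u≤s} [ (x(u) − α̃(u)) ∨ sup_{u≤r≤s}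 (x(r) − β̃(r)) ]. Then for every s ∈ [0,T], K(T−s) − K(T) = 1_{{T_β̃ < T_α̃}} 1_{{s ≥ T_β̃}} H(s) + 1_{{T_α̃ < T_β̃}} 1_{{s ≥ T_α̃}} L(s). -/
/-!
Reverse time: `y(u) = Y(T - u)` stays between the reversed barriers, and `k(u) = K(T - u) - K(T)`
starts at `0`, can only increase while `y` sits on the lower barrier and only decrease while it
sits on the upper one, because the minimality conditions make `A` (resp. `C`) flat wherever
`Y > α` (resp. `Y < β`). The free path is `x = y + k`.

Before `y` first touches a barrier, `k = 0` and `x` is strictly inside, so neither hitting time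
has occurred. If the first touch `τ` is on the upper barrier, then `y` stays away from the lower
barrier for a while after `τ`, so `k ≥ 0` there: `x` reaches the upper barrier at times
accumulating at `τ` and the lower one only later, i.e. `T_β̃ ≤ τ < T_α̃`. In that regime
`H(s) = k(s)`: looking back from `s` to the last visit of the lower barrier bounds every term of
the supremum by `k(s)`, and the term at the last visit of the upper barrier is at least `k(s)`.
A first touch of the lower barrier is the mirror image under `(y, k, α, β) ↦ (-y, -k, -β, -α)`.
-/

open MeasureTheory Set

theorem coe_le_sInf_image_coe {S : Set ℝ} {c : ℝ} (h : ∀ u ∈ S, c ≤ u) :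
    (c : EReal) ≤ sInf ((fun s : ℝ => (s : EReal)) '' S) :=
  le_sInf <| by
    rintro _ ⟨u, hu, rfl⟩
    exact EReal.coe_le_coe_iff.2 (h u hu)

theorem image_neg_comp {α : Type*} (f : α → ℝ) (S : Set α) :
    (fun u => -f u) '' S = -(f '' S) := by
  rw [← Set.image_neg_eq_neg, Set.image_image]

theorem isCompact_setOf_eq {f g : ℝ → ℝ} {a b : ℝ} (hf : ContinuousOn f (Icc a b))
    (hg : ContinuousOn g (Icc a b)) : IsCompact {r ∈ Icc a b | f r = g r} := by
  refine isCompact_Icc.of_isClosed_subset ?_ (sep_subset _ _)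
  convert (hf.sub hg).preimage_isClosed_of_isClosed isClosed_Icc (isClosed_singleton (x := 0))
    using 1
  ext r
  simp [sub_eq_zero]

theorem exists_last_eq {f g : ℝ → ℝ} {a b : ℝ} (hf : ContinuousOn f (Icc a b))
    (hg : ContinuousOn g (Icc a b)) (h : ∃ w ∈ Icc a b, f w = g w) :
    ∃ σ ∈ Icc a b, f σ = g σ ∧ ∀ r ∈ Ioc σ b, f r ≠ g r := by
  obtain ⟨σ, ⟨hσ, hfg⟩, hmax⟩ := (isCompact_setOf_eq hf hg).exists_isGreatest h
  refine ⟨σ, hσ, hfg, fun r hr hfgr => ?_⟩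
  exact (hmax ⟨⟨hσ.1.trans hr.1.le, hr.2⟩, hfgr⟩).not_gt hr.1

theorem StieltjesFunction.eq_of_setIntegral_eq_zero (A : StieltjesFunction ℝ) {f : ℝ → ℝ}
    {s : Set ℝ} (hs : MeasurableSet s) (hf : IntegrableOn f s A.measure)
    (hnn : ∀ t ∈ s, 0 ≤ f t) (hint : ∫ t in s, f t ∂A.measure = 0) {p q : ℝ} (hpq : p ≤ q)
    (hq : ContinuousAt A q) (hsub : Ioo p q ⊆ s) (hpos : ∀ t ∈ Ioo p q, 0 < f t) :
    A q = A p := by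
  have hzero : f =ᵐ[A.measure.restrict (Ioo p q)] 0 :=
    ae_restrict_of_ae_restrict_of_subset hsub <|
      (setIntegral_eq_zero_iff_of_nonneg_ae (ae_restrict_of_forall_mem hs hnn) hf).1 hint
  have hnull : A.measure (Ioo p q) = 0 := by
    rw [measure_eq_zero_iff_ae_notMem]
    filter_upwards [(ae_restrict_iff' measurableSet_Ioo).1 hzero] with t ht htpq
    exact (hpos t htpq).ne' (ht htpq)
  rw [StieltjesFunction.measure_Ioo, hq.continuousWithinAt.leftLim_eq,
    ENNReal.ofReal_eq_zero, sub_nonpos] at hnull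
  exact le_antisymm hnull (A.mono hpq)

noncomputable def skorokhodH (x lo hi : ℝ → ℝ) (s : ℝ) : ℝ :=
  sSup ((fun u => min (x u - hi u) (sInf ((fun r => x r - lo r) '' Icc u s))) '' Icc 0 s)

noncomputable def skorokhodL (x lo hi : ℝ → ℝ) (s : ℝ) : ℝ :=
  sInf ((fun u => max (x u - lo u) (sSup ((fun r => x r - hi r) '' Icc u s))) '' Icc 0 s)

noncomputable def firstHitBelow (T : ℝ) (x lo : ℝ → ℝ) : EReal :=
  sInf ((fun s : ℝ => (s : EReal)) '' {s ∈ Ioc 0 T | x s ≤ lo s})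

noncomputable def firstHitAbove (T : ℝ) (x hi : ℝ → ℝ) : EReal :=
  sInf ((fun s : ℝ => (s : EReal)) '' {s ∈ Ioc 0 T | hi s ≤ x s})

def touchSet (T : ℝ) (y lo hi : ℝ → ℝ) : Set ℝ :=
  {u ∈ Ioc 0 T | y u = lo u ∨ y u = hi u}

theorem skorokhodL_eq_neg_skorokhodH (x lo hi : ℝ → ℝ) (s : ℝ) :
    skorokhodL x lo hi s = -skorokhodH (-x) (-hi) (-lo) s := by
  have hterm : (fun u => min ((-x) u - (-lo) u) (sInf ((fun r => (-x) r - (-hi) r) '' Icc u s)))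
      = fun u => -max (x u - lo u) (sSup ((fun r => x r - hi r) '' Icc u s)) := by
    funext u
    simp only [Pi.neg_apply, neg_sub_neg, ← neg_sub (x _), image_neg_comp, Real.sInf_neg,
      min_neg_neg]
  rw [skorokhodH, hterm, image_neg_comp, Real.sSup_neg, neg_neg, skorokhodL]

theorem firstHitAbove_neg (T : ℝ) (x lo : ℝ → ℝ) :
    firstHitAbove T (-x) (-lo) = firstHitBelow T x lo := by
  simp only [firstHitAbove, firstHitBelow, Pi.neg_apply, neg_le_neg_iff]

theorem firstHitBelow_neg (T : ℝ) (x hi : ℝ → ℝ) :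
    firstHitBelow T (-x) (-hi) = firstHitAbove T x hi := by
  simp only [firstHitAbove, firstHitBelow, Pi.neg_apply, neg_le_neg_iff]

theorem touchSet_neg (T : ℝ) (y lo hi : ℝ → ℝ) :
    touchSet T (-y) (-hi) (-lo) = touchSet T y lo hi := by
  ext u
  simp only [touchSet, Pi.neg_apply, neg_inj, or_comm]

structure IsReflected (T : ℝ) (y k lo hi : ℝ → ℝ) : Prop where
  continuousOn_y : ContinuousOn y (Icc 0 T)
  continuousOn_k : ContinuousOn k (Icc 0 T)
  continuousOn_lo : ContinuousOn lo (Icc 0 T)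
  continuousOn_hi : ContinuousOn hi (Icc 0 T)
  lo_le : ∀ u ∈ Icc 0 T, lo u ≤ y u
  le_hi : ∀ u ∈ Icc 0 T, y u ≤ hi u
  lo_lt_hi : ∀ u ∈ Icc 0 T, lo u < hi u
  k_zero : k 0 = 0
  le_of_lo_lt : ∀ p q, 0 ≤ p → p ≤ q → q ≤ T → (∀ r ∈ Ioo p q, lo r < y r) → k p ≤ k q
  le_of_lt_hi : ∀ p q, 0 ≤ p → p ≤ q → q ≤ T → (∀ r ∈ Ioo p q, y r < hi r) → k q ≤ k p

namespace IsReflected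

variable {T : ℝ} {y k lo hi : ℝ → ℝ}

theorem neg (h : IsReflected T y k lo hi) : IsReflected T (-y) (-k) (-hi) (-lo) where
  continuousOn_y := h.continuousOn_y.neg
  continuousOn_k := h.continuousOn_k.neg
  continuousOn_lo := h.continuousOn_hi.neg
  continuousOn_hi := h.continuousOn_lo.neg
  lo_le u hu := neg_le_neg (h.le_hi u hu)
  le_hi u hu := neg_le_neg (h.lo_le u hu)
  lo_lt_hi u hu := neg_lt_neg (h.lo_lt_hi u hu)
  k_zero := by simp [h.k_zero]
  le_of_lo_lt p q hp hpq hq hlt :=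
    neg_le_neg (h.le_of_lt_hi p q hp hpq hq fun r hr => neg_lt_neg_iff.1 (hlt r hr))
  le_of_lt_hi p q hp hpq hq hlt :=
    neg_le_neg (h.le_of_lo_lt p q hp hpq hq fun r hr => neg_lt_neg_iff.1 (hlt r hr))

theorem k_eq_zero (h : IsReflected T y k lo hi) {u : ℝ} (hu : u ∈ Icc 0 T)
    (hin : ∀ r ∈ Ioo 0 u, y r ∈ Ioo (lo r) (hi r)) : k u = 0 := by
  have h₁ := h.le_of_lo_lt 0 u le_rfl hu.1 hu.2 fun r hr => (hin r hr).1
  have h₂ := h.le_of_lt_hi 0 u le_rfl hu.1 hu.2 fun r hr => (hin r hr).2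
  linarith [h.k_zero]

theorem mem_Ioo_of_notMem_touchSet (h : IsReflected T y k lo hi) {u : ℝ} (hu : u ∈ Ioc 0 T)
    (hnot : u ∉ touchSet T y lo hi) : y u ∈ Ioo (lo u) (hi u) := by
  obtain ⟨hlo, hhi⟩ := not_or.1 fun htouch => hnot ⟨hu, htouch⟩
  exact ⟨(h.lo_le u (Ioc_subset_Icc_self hu)).lt_of_ne (Ne.symm hlo),
    (h.le_hi u (Ioc_subset_Icc_self hu)).lt_of_ne hhi⟩

theorem add_mem_Ioo_of_lt_lowerBound (h : IsReflected T y k lo hi) {b u : ℝ}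
    (hb : b ∈ lowerBounds (touchSet T y lo hi)) (hu : u ∈ Ioc 0 T) (hub : u < b) :
    y u + k u ∈ Ioo (lo u) (hi u) := by
  have hin : ∀ r ∈ Ioc 0 u, y r ∈ Ioo (lo r) (hi r) := fun r hr =>
    h.mem_Ioo_of_notMem_touchSet ⟨hr.1, hr.2.trans hu.2⟩ fun hmem =>
      (hr.2.trans_lt hub).not_ge (hb hmem)
  have hk := h.k_eq_zero (Ioc_subset_Icc_self hu) fun r hr => hin r (Ioo_subset_Ioc_self hr)
  rw [hk, add_zero]
  exact hin u ⟨hu.1, le_rfl⟩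

theorem coe_le_firstHitBelow (h : IsReflected T y k lo hi) {b : ℝ}
    (hb : b ∈ lowerBounds (touchSet T y lo hi)) : (b : EReal) ≤ firstHitBelow T (y + k) lo :=
  coe_le_sInf_image_coe fun _ hu =>
    le_of_not_gt fun hub => (h.add_mem_Ioo_of_lt_lowerBound hb hu.1 hub).1.not_ge hu.2

theorem coe_le_firstHitAbove (h : IsReflected T y k lo hi) {b : ℝ}
    (hb : b ∈ lowerBounds (touchSet T y lo hi)) : (b : EReal) ≤ firstHitAbove T (y + k) hi :=
  coe_le_sInf_image_coe fun _ hu =>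
    le_of_not_gt fun hub => (h.add_mem_Ioo_of_lt_lowerBound hb hu.1 hub).2.not_ge hu.2

theorem mem_of_isGLB_touchSet (h : IsReflected T y k lo hi) {τ : ℝ}
    (hτ : IsGLB (touchSet T y lo hi) τ) (hne : (touchSet T y lo hi).Nonempty) :
    τ ∈ Icc 0 T ∧ (y τ = lo τ ∨ y τ = hi τ) := by
  have hclosed : IsClosed {u ∈ Icc 0 T | y u = lo u ∨ y u = hi u} := by
    rw [sep_or]
    exact (isCompact_setOf_eq h.continuousOn_y h.continuousOn_lo).isClosed.union
      (isCompact_setOf_eq h.continuousOn_y h.continuousOn_hi).isClosed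
  exact hclosed.closure_subset_iff.2 (fun u hu => ⟨Ioc_subset_Icc_self hu.1, hu.2⟩)
    (hτ.mem_closure hne)

theorem skorokhodH_term_le (h : IsReflected T y k lo hi) {u s : ℝ} (hu : u ∈ Icc 0 s) (hs : s ≤ T) :
    min ((y + k) u - hi u) (sInf ((fun r => (y + k) r - lo r) '' Icc u s)) ≤ k s := by
  have hsub : Icc u s ⊆ Icc 0 T := Icc_subset_Icc hu.1 hs
  by_cases hlo : ∃ w ∈ Icc u s, y w = lo w
  · obtain ⟨ρ, hρ, hρlo, hlast⟩ :=
      exists_last_eq (h.continuousOn_y.mono hsub) (h.continuousOn_lo.mono hsub) hlo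
    have hbdd := (isCompact_Icc.image_of_continuousOn
      (((h.continuousOn_y.add h.continuousOn_k).sub h.continuousOn_lo).mono hsub)).bddBelow
    calc _ ≤ sInf ((fun r => (y + k) r - lo r) '' Icc u s) := min_le_right _ _
      _ ≤ (y + k) ρ - lo ρ := csInf_le hbdd ⟨ρ, hρ, rfl⟩
      _ = k ρ := by simp [hρlo]
      _ ≤ k s := h.le_of_lo_lt ρ s (hu.1.trans hρ.1) hρ.2 hs fun r hr =>
          (h.lo_le r (hsub ⟨hρ.1.trans hr.1.le, hr.2.le⟩)).lt_of_ne
            (hlast r ⟨hr.1, hr.2.le⟩).symm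
  · push Not at hlo
    calc _ ≤ (y + k) u - hi u := min_le_left _ _
      _ ≤ k u := by simp only [Pi.add_apply]; linarith [h.le_hi u (hsub ⟨le_rfl, hu.2⟩)]
      _ ≤ k s := h.le_of_lo_lt u s hu.1 hu.2 hs fun r hr =>
          (h.lo_le r (hsub ⟨hr.1.le, hr.2.le⟩)).lt_of_ne (hlo r ⟨hr.1.le, hr.2.le⟩).symm

theorem skorokhodH_eq (h : IsReflected T y k lo hi) {s w : ℝ} (hs : s ∈ Icc 0 T)
    (hw : w ∈ Icc 0 s) (hwt : y w = hi w) : skorokhodH (y + k) lo hi s = k s := by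
  have hsub : Icc 0 s ⊆ Icc 0 T := Icc_subset_Icc le_rfl hs.2
  obtain ⟨σ, hσ, hσhi, hlast⟩ :=
    exists_last_eq (h.continuousOn_y.mono hsub) (h.continuousOn_hi.mono hsub) ⟨w, hw, hwt⟩
  have hk : ∀ r ∈ Icc σ s, k s ≤ k r := fun r hr =>
    h.le_of_lt_hi r s (hσ.1.trans hr.1) hr.2 hs.2 fun r' hr' =>
      (h.le_hi r' (hsub ⟨(hσ.1.trans hr.1).trans hr'.1.le, hr'.2.le⟩)).lt_of_ne
        (hlast r' ⟨hr.1.trans_lt hr'.1, hr'.2.le⟩)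
  have hσterm : k s ≤ min ((y + k) σ - hi σ) (sInf ((fun r => (y + k) r - lo r) '' Icc σ s)) := by
    refine le_min (by simpa [hσhi] using hk σ ⟨le_rfl, hσ.2⟩) ?_
    refine le_csInf ((nonempty_Icc.2 hσ.2).image _) ?_
    rintro _ ⟨r, hr, rfl⟩
    simp only [Pi.add_apply]
    linarith [hk r hr, h.lo_le r (hsub ⟨hσ.1.trans hr.1, hr.2⟩)]
  have hle : k s ∈ upperBounds ((fun u => min ((y + k) u - hi u)
      (sInf ((fun r => (y + k) r - lo r) '' Icc u s))) '' Icc 0 s) := by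
    rintro _ ⟨u, hu, rfl⟩
    exact h.skorokhodH_term_le hu hs.2
  exact le_antisymm (csSup_le ((nonempty_Icc.2 hs.1).image _) hle)
    (hσterm.trans (le_csSup ⟨k s, hle⟩ ⟨σ, hσ, rfl⟩))

theorem skorokhodL_eq (h : IsReflected T y k lo hi) {s w : ℝ} (hs : s ∈ Icc 0 T)
    (hw : w ∈ Icc 0 s) (hwt : y w = lo w) : skorokhodL (y + k) lo hi s = k s := by
  rw [skorokhodL_eq_neg_skorokhodH, neg_add, h.neg.skorokhodH_eq hs hw (by simp [hwt]),
    Pi.neg_apply, neg_neg]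

theorem firstHitAbove_le_lt_firstHitBelow (h : IsReflected T y k lo hi) {τ : ℝ}
    (hτ : IsGLB (touchSet T y lo hi) τ) (hτT : τ ∈ Icc 0 T) (hτhi : y τ = hi τ) :
    firstHitAbove T (y + k) hi ≤ τ ∧ (τ : EReal) < firstHitBelow T (y + k) lo := by
  obtain ⟨η, hη, hball⟩ : ∃ η > 0, ∀ u, dist u τ < η → u ∈ Icc 0 T → 0 < y u - lo u := by
    have hcont := (h.continuousOn_y.sub h.continuousOn_lo) τ hτT
    have hpos : 0 < y τ - lo τ := sub_pos.2 (hτhi ▸ h.lo_lt_hi τ hτT)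
    exact Metric.eventually_nhds_iff.1
      (eventually_nhdsWithin_iff.1 (hcont.eventually_const_lt hpos))
  have hy : ∀ u ∈ Icc 0 T, 0 < u → u < τ + η → lo u < y u := by
    intro u hu hu0 huη
    rcases lt_or_ge u τ with huτ | hτu
    · exact (h.mem_Ioo_of_notMem_touchSet ⟨hu0, hu.2⟩ fun hmem => huτ.not_ge (hτ.1 hmem)).1
    · have := hball u (by rw [Real.dist_eq, abs_of_nonneg (sub_nonneg.2 hτu)]; linarith) hu
      linarith
  have hk : ∀ u ∈ Icc 0 T, u < τ + η → 0 ≤ k u := fun u hu huη =>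
    h.k_zero ▸ h.le_of_lo_lt 0 u le_rfl hu.1 hu.2 fun r hr =>
      hy r ⟨hr.1.le, hr.2.le.trans hu.2⟩ hr.1 (hr.2.trans huη)
  refine ⟨EReal.le_of_forall_lt_iff_le.1 fun z hz => ?_, ?_⟩
  · obtain ⟨u, hu, -, huz⟩ := hτ.exists_between (lt_min (EReal.coe_lt_coe_iff.1 hz)
      (lt_add_of_pos_right τ hη))
    have huT : u ∈ Icc 0 T := Ioc_subset_Icc_self hu.1
    have hhi : y u = hi u := hu.2.resolve_left
      (hy u huT hu.1.1 (huz.trans_le (min_le_right _ _))).ne'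
    have hhit : hi u ≤ (y + k) u := by
      simp only [Pi.add_apply]
      linarith [hk u huT (huz.trans_le (min_le_right _ _))]
    calc firstHitAbove T (y + k) hi ≤ u := sInf_le ⟨u, ⟨hu.1, hhit⟩, rfl⟩
      _ ≤ z := EReal.coe_le_coe_iff.2 (huz.le.trans (min_le_left _ _))
  · refine (EReal.coe_lt_coe_iff.2 (lt_add_of_pos_right τ hη)).trans_le
      (coe_le_sInf_image_coe fun u hu => ?_)
    by_contra! huη
    have huT : u ∈ Icc 0 T := Ioc_subset_Icc_self hu.1
    have hhit : y u + k u ≤ lo u := hu.2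
    linarith [hy u huT hu.1.1 huη, hk u huT huη]

theorem eq_indicator (h : IsReflected T y k lo hi) {s : ℝ} (hs : s ∈ Icc 0 T) :
    k s =
      (if firstHitAbove T (y + k) hi < firstHitBelow T (y + k) lo ∧
          firstHitAbove T (y + k) hi ≤ (s : EReal) then skorokhodH (y + k) lo hi s else 0) +
      (if firstHitBelow T (y + k) lo < firstHitAbove T (y + k) hi ∧
          firstHitBelow T (y + k) lo ≤ (s : EReal) then skorokhodL (y + k) lo hi s else 0) := by
  by_cases hb : ∃ b ∈ lowerBounds (touchSet T y lo hi), s < b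
  · obtain ⟨b, hb, hsb⟩ := hb
    have hsα := (EReal.coe_lt_coe_iff.2 hsb).trans_le (h.coe_le_firstHitBelow hb)
    have hsβ := (EReal.coe_lt_coe_iff.2 hsb).trans_le (h.coe_le_firstHitAbove hb)
    rw [if_neg fun hc => hc.2.not_gt hsβ, if_neg fun hc => hc.2.not_gt hsα, add_zero]
    refine h.k_eq_zero hs fun r hr => h.mem_Ioo_of_notMem_touchSet ⟨hr.1, hr.2.le.trans hs.2⟩ ?_
    exact fun hmem => (hr.2.trans hsb).not_ge (hb hmem)
  push Not at hb
  have hne : (touchSet T y lo hi).Nonempty := by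
    by_contra! hE
    exact (hb (s + 1) (by simp [hE])).not_gt (lt_add_one s)
  obtain ⟨τ, hτ⟩ : ∃ τ, IsGLB (touchSet T y lo hi) τ :=
    ⟨_, isGLB_csInf hne ⟨0, fun _ hu => hu.1.1.le⟩⟩
  obtain ⟨hτT, htouch⟩ := h.mem_of_isGLB_touchSet hτ hne
  have hτs : τ ∈ Icc 0 s := ⟨hτT.1, hb τ hτ.1⟩
  rcases htouch with hτlo | hτhi
  · obtain ⟨hα, hβ⟩ := h.neg.firstHitAbove_le_lt_firstHitBelow (by rwa [touchSet_neg]) hτT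
      (by simp [hτlo])
    simp only [← neg_add, firstHitAbove_neg, firstHitBelow_neg] at hα hβ
    rw [if_neg fun hc => hc.1.not_gt (hα.trans_lt hβ),
      if_pos ⟨hα.trans_lt hβ, hα.trans (EReal.coe_le_coe_iff.2 hτs.2)⟩, zero_add,
      h.skorokhodL_eq hs hτs hτlo]
  · obtain ⟨hβ, hα⟩ := h.firstHitAbove_le_lt_firstHitBelow hτ hτT hτhi
    rw [if_pos ⟨hβ.trans_lt hα, hβ.trans (EReal.coe_le_coe_iff.2 hτs.2)⟩,
      if_neg fun hc => hc.1.not_gt (hβ.trans_lt hα), add_zero, h.skorokhodH_eq hs hτs hτhi]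

end IsReflected

theorem mapsTo_const_sub_Icc (T : ℝ) : MapsTo (fun u => T - u) (Icc 0 T) (Icc 0 T) :=
  fun _ hu => ⟨sub_nonneg.2 hu.2, sub_le_self T hu.1⟩

theorem ContinuousOn.comp_const_sub_Icc {f : ℝ → ℝ} {T : ℝ} (hf : ContinuousOn f (Icc 0 T)) :
    ContinuousOn (fun u => f (T - u)) (Icc 0 T) :=
  hf.comp (continuous_const.sub continuous_id).continuousOn (mapsTo_const_sub_Icc T)

theorem isReflected_timeReversal {T : ℝ} {α β Y : ℝ → ℝ} (hα : ContinuousOn α (Icc 0 T))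
    (hβ : ContinuousOn β (Icc 0 T)) (hY : ContinuousOn Y (Icc 0 T))
    (hlt : ∀ t ∈ Icc 0 T, α t < β t) {A C : StieltjesFunction ℝ} (hAc : Continuous (A : ℝ → ℝ))
    (hCc : Continuous (C : ℝ → ℝ)) (hbar : ∀ t ∈ Icc 0 T, α t ≤ Y t ∧ Y t ≤ β t)
    (hminA : ∫ t in Icc 0 T, (Y t - α t) ∂A.measure = 0)
    (hminC : ∫ t in Icc 0 T, (β t - Y t) ∂C.measure = 0) {K : ℝ → ℝ}
    (hK : ∀ t, K t = A t - C t) :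
    IsReflected T (fun u => Y (T - u)) (fun u => K (T - u) - K T) (fun u => α (T - u))
      (fun u => β (T - u)) := by
  have hflat : ∀ (D : StieltjesFunction ℝ) (f : ℝ → ℝ), Continuous (D : ℝ → ℝ) →
      ContinuousOn f (Icc 0 T) → (∀ t ∈ Icc 0 T, 0 ≤ f t) → ∫ t in Icc 0 T, f t ∂D.measure = 0 →
      ∀ p q, 0 ≤ p → p ≤ q → q ≤ T → (∀ r ∈ Ioo p q, 0 < f (T - r)) → D (T - p) = D (T - q) :=
    fun D f hD hf hnn hint p q hp hpq hq hpos =>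
    D.eq_of_setIntegral_eq_zero measurableSet_Icc (hf.integrableOn_compact isCompact_Icc) hnn hint
      (by linarith) hD.continuousAt
      (Ioo_subset_Icc_self.trans (Icc_subset_Icc (by linarith) (by linarith))) fun t ht => by
        simpa using hpos (T - t) ⟨by linarith [ht.2], by linarith [ht.1]⟩
  have hKc : Continuous K := by
    rw [funext hK]
    exact hAc.sub hCc
  refine
    { continuousOn_y := hY.comp_const_sub_Icc
      continuousOn_k :=
        ((hKc.comp (continuous_const.sub continuous_id)).sub continuous_const).continuousOn
      continuousOn_lo := hα.comp_const_sub_Icc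
      continuousOn_hi := hβ.comp_const_sub_Icc
      lo_le := fun u hu => (hbar _ (mapsTo_const_sub_Icc T hu)).1
      le_hi := fun u hu => (hbar _ (mapsTo_const_sub_Icc T hu)).2
      lo_lt_hi := fun u hu => hlt _ (mapsTo_const_sub_Icc T hu)
      k_zero := by simp
      le_of_lo_lt := fun p q hp hpq hq hpos => ?_
      le_of_lt_hi := fun p q hp hpq hq hpos => ?_ }
  · have hA := hflat A (fun t => Y t - α t) hAc (hY.sub hα) (fun t ht => sub_nonneg.2 (hbar t ht).1)
      hminA p q hp hpq hq fun r hr => sub_pos.2 (hpos r hr)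
    have hC := C.mono (show T - q ≤ T - p by linarith)
    simp only [hK]
    linarith
  · have hC := hflat C (fun t => β t - Y t) hCc (hβ.sub hY) (fun t ht => sub_nonneg.2 (hbar t ht).2)
      hminC p q hp hpq hq fun r hr => sub_pos.2 (hpos r hr)
    have hA := A.mono (show T - q ≤ T - p by linarith)
    simp only [hK]
    linarith

open scoped Classical

theorem skorokhod_explicit_formula_general
    (T : ℝ)
    (α β Y : ℝ → ℝ)
    (hα : ContinuousOn α (Icc 0 T)) (hβ : ContinuousOn β (Icc 0 T))
    (hsep : 0 < sInf ((fun t => β t - α t) '' Icc 0 T))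
    (hY : ContinuousOn Y (Icc 0 T))
    (A C : StieltjesFunction ℝ)
    (hAc : Continuous (A : ℝ → ℝ)) (hCc : Continuous (C : ℝ → ℝ))
    (hbar : ∀ t ∈ Icc 0 T, α t ≤ Y t ∧ Y t ≤ β t)
    (hminA : ∫ t in Icc 0 T, (Y t - α t) ∂A.measure = 0)
    (hminC : ∫ t in Icc 0 T, (β t - Y t) ∂C.measure = 0)
    (K x αr βr : ℝ → ℝ)
    (hK : ∀ t, K t = A t - C t)
    (hx : ∀ s, x s = Y (T - s) + (K (T - s) - K T))
    (hαr : ∀ s, αr s = α (T - s)) (hβr : ∀ s, βr s = β (T - s))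
    (Tα Tβ : EReal)
    (hTα : Tα = sInf ((fun s : ℝ => (s : EReal)) '' {s ∈ Ioc 0 T | x s ≤ αr s}))
    (hTβ : Tβ = sInf ((fun s : ℝ => (s : EReal)) '' {s ∈ Ioc 0 T | βr s ≤ x s}))
    (H L : ℝ → ℝ)
    (hH : ∀ s, H s = sSup ((fun u => min (x u - βr u)
        (sInf ((fun r => x r - αr r) '' Icc u s))) '' Icc 0 s))
    (hL : ∀ s, L s = sInf ((fun u => max (x u - αr u)
        (sSup ((fun r => x r - βr r) '' Icc u s))) '' Icc 0 s)) :
    ∀ s ∈ Icc 0 T,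
      K (T - s) - K T =
        (if Tβ < Tα ∧ Tβ ≤ (s : EReal) then H s else 0) +
        (if Tα < Tβ ∧ Tα ≤ (s : EReal) then L s else 0) := by
  intro s hs
  have hlt : ∀ t ∈ Icc 0 T, α t < β t := fun t ht => by
    have := csInf_le (isCompact_Icc.image_of_continuousOn (f := fun t => β t - α t)
      (hβ.sub hα)).bddBelow ⟨t, ht, rfl⟩
    linarith
  have hrefl := isReflected_timeReversal hα hβ hY hlt hAc hCc hbar hminA hminC hK
  obtain rfl : x = (fun u => Y (T - u)) + fun u => K (T - u) - K T := funext hx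
  obtain rfl : αr = fun u => α (T - u) := funext hαr
  obtain rfl : βr = fun u => β (T - u) := funext hβr
  subst hTα hTβ
  rw [hH, hL]
  exact hrefl.eq_indicator hs

/-- Explicit Skorokhod-map representation of the constraining process `K = A - C`
of a (deterministic) doubly reflected path, in the alternative form of Slaby:
with the time-reversed free path `x(s) = Y(T-s) + (K(T-s) - K(T))` and reversed
barriers `α̃(s) = α(T-s)`, `β̃(s) = β(T-s)`, first boundary-hitting times
`T_α̃`, `T_β̃` (valued in `EReal`, equal to `+∞` when the corresponding set is
empty), and the path functionals `H`, `L`, one has for every `s ∈ [0,T]`: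
`K(T-s) - K(T) = 1_{T_β̃ < T_α̃} 1_{s ≥ T_β̃} H(s) + 1_{T_α̃ < T_β̃} 1_{s ≥ T_α̃} L(s)`. -/
theorem skorokhod_explicit_formula
    (T : ℝ) (hT : 0 < T)
    (α β Y : ℝ → ℝ)
    (hα : ContinuousOn α (Icc 0 T)) (hβ : ContinuousOn β (Icc 0 T))
    (hsep : 0 < sInf ((fun t => β t - α t) '' Icc 0 T))
    (hY : ContinuousOn Y (Icc 0 T))
    (A C : StieltjesFunction ℝ)
    (hAc : Continuous (A : ℝ → ℝ)) (hCc : Continuous (C : ℝ → ℝ))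
    (hA0 : A 0 = 0) (hC0 : C 0 = 0)
    (hbar : ∀ t ∈ Icc 0 T, α t ≤ Y t ∧ Y t ≤ β t)
    (hminA : ∫ t in Icc 0 T, (Y t - α t) ∂A.measure = 0)
    (hminC : ∫ t in Icc 0 T, (β t - Y t) ∂C.measure = 0)
    (K x αr βr : ℝ → ℝ)
    (hK : ∀ t, K t = A t - C t)
    (hx : ∀ s, x s = Y (T - s) + (K (T - s) - K T))
    (hαr : ∀ s, αr s = α (T - s)) (hβr : ∀ s, βr s = β (T - s))
    (Tα Tβ : EReal)
    (hTα : Tα = sInf ((fun s : ℝ => (s : EReal)) '' {s ∈ Ioc 0 T | x s ≤ αr s}))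
    (hTβ : Tβ = sInf ((fun s : ℝ => (s : EReal)) '' {s ∈ Ioc 0 T | βr s ≤ x s}))
    (H L : ℝ → ℝ)
    (hH : ∀ s, H s = sSup ((fun u => min (x u - βr u)
        (sInf ((fun r => x r - αr r) '' Icc u s))) '' Icc 0 s))
    (hL : ∀ s, L s = sInf ((fun u => max (x u - αr u)
        (sSup ((fun r => x r - βr r) '' Icc u s))) '' Icc 0 s)) :
    ∀ s ∈ Icc 0 T,
      K (T - s) - K T =
        (if Tβ < Tα ∧ Tβ ≤ (s : EReal) then H s else 0) +
        (if Tα < Tβ ∧ Tα ≤ (s : EReal) then L s else 0) :=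
  skorokhod_explicit_formula_general T α β Y hα hβ hsep hY A C hAc hCc hbar hminA hminC K x αr βr hK
    hx hαr hβr Tα Tβ hTα hTβ H L hH hL
end
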